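/- Let n ≥ 1, α ∈ (0,1), and let a_1,…,a_n, r_1,…,r_n, and y be real numbers with r_i ≥ 0. If y ∉ [ q⁻_{α,n}{a_i − r_i}, q⁺_{α,n}{a_i + r_i} ], then Σ_{i=1}^{n} 1[ |y − a_i| > r_i ] ≥ (1−α)(n+1). In particular, applied with a_i = μ̂_{φ∖i}(X_{n+1}), r_i = R_i = |Y_i − μ̂_{φ∖i}(X_i)|, and y = Y_{n+1}: if Y_{n+1} ∉ Ĉ^{J+aB}_{α,n,B}(X_{n+1}), then Σ_{i=1}^{n} 1[ |Y_{n+1} − μ̂_{φ∖i}(X_{n+1})| > R_i ] ≥ (1−α)(n+1). -/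

import Mathlib

open MeasureTheory ProbabilityTheory Finset
open scoped ENNReal

noncomputable section

namespace JaB

/-- The `k`-th smallest entry of a list of real numbers, viewed in the extended reals;
equal to `⊤` when `k` exceeds the length of the list. -/
def kthSmallest (l : List ℝ) (k : ℕ) : EReal :=
  ((List.insertionSort (· ≤ ·) l).map (fun x : ℝ => (x : EReal))).getD (k - 1) ⊤

/-- Upper `α`-quantile `q⁺_{α,n}` of the `n` values `v 0, …, v (n-1)`: the
`⌈(1-α)(n+1)⌉`-th smallest value (`⊤` if `⌈(1-α)(n+1)⌉ > n`). -/
def qPlus {n : ℕ} (α : ℝ) (v : Fin n → ℝ) : EReal :=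
  kthSmallest (List.ofFn v) ⌈(1 - α) * ((n : ℝ) + 1)⌉₊

/-- Lower `α`-quantile `q⁻_{α,n}{v i} = -q⁺_{α,n}{-v i}`. -/
def qMinus {n : ℕ} (α : ℝ) (v : Fin n → ℝ) : EReal :=
  - qPlus α (fun i => - v i)

/-- Membership of `y` in the `ε`-inflated jackknife+-type interval
`[q⁻_{α,n}{muLOO i - R i} - ε, q⁺_{α,n}{muLOO i + R i} + ε]`. -/
def memJp {n : ℕ} (α : ℝ) (muLOO R : Fin n → ℝ) (ε : ℝ) (y : ℝ) : Prop :=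
  qMinus α (fun i => muLOO i - R i) - (ε : EReal) ≤ (y : EReal) ∧
    (y : EReal) ≤ qPlus α (fun i => muLOO i + R i) + (ε : EReal)

/-- A base regression algorithm: it maps a finite sequence of data points in
`ℝ^p × ℝ` to a regression function `ℝ^p → ℝ`. -/
abbrev RegAlg (p : ℕ) := List ((Fin p → ℝ) × ℝ) → (Fin p → ℝ) → ℝ

/-- A regression algorithm is symmetric if it is invariant under permutation
of its input data points. -/
def SymmAlg {p : ℕ} (Alg : RegAlg p) : Prop :=
  ∀ l l' : List ((Fin p → ℝ) × ℝ), l.Perm l' → Alg l = Alg l'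

/-- An aggregation function is symmetric if it is invariant under permutation
of its arguments. -/
def SymmAgg (agg : List ℝ → ℝ) : Prop :=
  ∀ l l' : List ℝ, l.Perm l' → agg l = agg l'

/-- The model fitted by `Alg` on the resample `s` (an `m`-tuple of indices,
allowing repeats) of the data `z`. -/
def fit {p : ℕ} (Alg : RegAlg p) {N m : ℕ} (z : Fin N → (Fin p → ℝ) × ℝ)
    (s : Fin m → Fin N) : (Fin p → ℝ) → ℝ :=
  Alg (List.ofFn fun j => z (s j))

/-- The leave-one-out ensemble model `μ̂_{φ∖i}` built from the first `Bc` resamples of an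
infinite sequence `S` of resamples: aggregate (via `agg`) the models fitted on those
resamples `S b`, `b < Bc`, that avoid the index `i`. -/
def looEns {p : ℕ} (Alg : RegAlg p) (agg : List ℝ → ℝ) {N m : ℕ}
    (z : Fin N → (Fin p → ℝ) × ℝ) (Bc : ℕ) (S : ℕ → Fin m → Fin N) (i : Fin N)
    (x : Fin p → ℝ) : ℝ :=
  agg ((((List.range Bc).filter fun b => decide (∀ k, S b k ≠ i))).map
    fun b => fit Alg z (S b) x)

/-- The leave-one-out ensemble model `μ̂_{φ∖i}` built from `B` resamples (fixed `B`). -/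
def looEnsF {p : ℕ} (Alg : RegAlg p) (agg : List ℝ → ℝ) {N m B : ℕ}
    (z : Fin N → (Fin p → ℝ) × ℝ) (s : Fin B → Fin m → Fin N) (i : Fin N)
    (x : Fin p → ℝ) : ℝ :=
  agg ((((List.finRange B).filter fun b => decide (∀ k, s b k ≠ i))).map
    fun b => fit Alg z (s b) x)

/-- The leave-two-out ensemble model `μ̃_{φ∖i,j}` built from `B` resamples. -/
def ltoEnsF {p : ℕ} (Alg : RegAlg p) (agg : List ℝ → ℝ) {N m B : ℕ}
    (z : Fin N → (Fin p → ℝ) × ℝ) (s : Fin B → Fin m → Fin N) (i j : Fin N)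
    (x : Fin p → ℝ) : ℝ :=
  agg ((((List.finRange B).filter fun b =>
      decide ((∀ k, s b k ≠ i) ∧ (∀ k, s b k ≠ j)))).map
    fun b => fit Alg z (s b) x)

/-- The full ensemble model `μ̂_φ` built from all `B` resamples. -/
def fullEnsF {p : ℕ} (Alg : RegAlg p) (agg : List ℝ → ℝ) {N m B : ℕ}
    (z : Fin N → (Fin p → ℝ) × ℝ) (s : Fin B → Fin m → Fin N)
    (x : Fin p → ℝ) : ℝ :=
  agg ((List.finRange B).map fun b => fit Alg z (s b) x)

/-- The model fitted by `Alg` on the data points indexed by a subset `s`. -/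
def fitSub {p : ℕ} (Alg : RegAlg p) {N : ℕ} (z : Fin N → (Fin p → ℝ) × ℝ)
    (s : Finset (Fin N)) : (Fin p → ℝ) → ℝ :=
  Alg ((s.sort (· ≤ ·)).map z)

/-- The leave-one-out ensemble model `μ̂_{φ∖i}` for subset (without replacement)
resampling, from the first `Bc` resamples of an infinite sequence `S`. -/
def looEnsSub {p : ℕ} (Alg : RegAlg p) (agg : List ℝ → ℝ) {N : ℕ}
    (z : Fin N → (Fin p → ℝ) × ℝ) (Bc : ℕ) (S : ℕ → Finset (Fin N)) (i : Fin N)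
    (x : Fin p → ℝ) : ℝ :=
  agg ((((List.range Bc).filter fun b => decide (i ∉ S b))).map
    fun b => fitSub Alg z (S b) x)

/-- The value at `k` of the Binomial(`N`, `θ`) probability mass function, as an
extended nonnegative real. -/
def binomPMF (N : ℕ) (θ : ℝ) (k : ℕ) : ℝ≥0∞ :=
  ENNReal.ofReal ((N.choose k : ℝ) * θ ^ k * (1 - θ) ^ (N - k))

/-- Arithmetic-mean aggregation (with default value `0` on the empty collection). -/
def meanAgg : List ℝ → ℝ := fun l => l.sum / l.length

/-- The permutation matrix `Π_σ` of a permutation `σ`, with entries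
`(Π_σ)_{σ(i), i} = 1` and zeros elsewhere. -/
def permMatrix {k : ℕ} (σ : Equiv.Perm (Fin k)) : Matrix (Fin k) (Fin k) ℝ :=
  Matrix.of fun a b => if a = σ b then 1 else 0

/-- The tournament matrix `A(R)` of a matrix `R`:
`A_{ij} = 1[R_{ij} > R_{ji}]` off the diagonal, `A_{ii} = 0`. -/
def tournament {k : ℕ} (R : Matrix (Fin k) (Fin k) ℝ) : Matrix (Fin k) (Fin k) ℝ :=
  Matrix.of fun i j => if i ≠ j ∧ R j i < R i j then 1 else 0

instance instMeasFinset (k : ℕ) : MeasurableSpace (Finset (Fin k)) := ⊤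

end JaB

open JaB

/-!
If `y` lies above `q⁺{a i + r i}`, the `⌈(1-α)(n+1)⌉`-th smallest of the `a i + r i` is below `y`,
so at least that many indices have `r i < y - a i ≤ |y - a i|`. Below `q⁻{a i - r i}` is the
mirror image, since `q⁻ = -q⁺(-·)`.
-/

theorem List.countP_ofFn {α : Type*} {n : ℕ} (v : Fin n → α) (p : α → Prop) [DecidablePred p] :
    (List.ofFn v).countP (fun x => decide (p x)) = #{i | p (v i)} := by
  calc (List.ofFn v).countP (fun x => decide (p x))
      = Multiset.countP p (List.ofFn v : Multiset α) := (Multiset.coe_countP _ _).symm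
    _ = Multiset.countP p (univ.val.map v) := by rw [Fin.univ_val_map]
    _ = #{i | p (v i)} := Multiset.countP_map _ _ _

theorem List.SortedLE.succ_le_countP_lt {α : Type*} [LinearOrder α] {s : List α}
    (hs : s.SortedLE) {j : ℕ} (hj : j < s.length) {w : α} (hw : s[j] < w) :
    j + 1 ≤ s.countP (· < w) := by
  have htake : ∀ x ∈ s.take (j + 1), x < w := by
    intro x hx
    obtain ⟨i, hi, rfl⟩ := List.mem_take_iff_getElem.mp hx
    exact (hs.getElem_le_getElem_of_le (by omega)).trans_lt hw
  calc j + 1 = (s.take (j + 1)).length := by rw [List.length_take]; omega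
    _ = (s.take (j + 1)).countP (· < w) :=
      (List.countP_eq_length.mpr fun x hx => decide_eq_true (htake x hx)).symm
    _ ≤ s.countP (· < w) := (List.take_sublist _ _).countP_le

namespace JaB

theorem le_countP_of_kthSmallest_lt {l : List ℝ} {k : ℕ} {w : ℝ}
    (h : kthSmallest l k < w) : k ≤ l.countP (· < w) := by
  cases k with
  | zero => exact Nat.zero_le _
  | succ j =>
    set s := l.insertionSort (· ≤ ·)
    by_cases hj : j < s.length
    · rw [kthSmallest, Nat.add_sub_cancel, List.getD_eq_getElem _ _ (by simpa [s] using hj),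
        List.getElem_map, EReal.coe_lt_coe_iff] at h
      calc j + 1 ≤ s.countP (· < w) := List.sortedLE_insertionSort.succ_le_countP_lt hj h
        _ = l.countP (· < w) := (List.perm_insertionSort _ l).countP_eq _
    · rw [kthSmallest, Nat.add_sub_cancel, List.getD_eq_default _ _ (by simpa [s] using hj)] at h
      exact absurd h not_top_lt

theorem ceil_le_card_of_qPlus_lt {n : ℕ} {α : ℝ} {v : Fin n → ℝ} {w : ℝ}
    (h : qPlus α v < w) : ⌈(1 - α) * ((n : ℝ) + 1)⌉₊ ≤ #{i | v i < w} := by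
  rw [← List.countP_ofFn v (· < w)]
  exact le_countP_of_kthSmallest_lt h

theorem ceil_le_card_of_lt_qMinus {n : ℕ} {α : ℝ} {v : Fin n → ℝ} {w : ℝ}
    (h : w < qMinus α v) : ⌈(1 - α) * ((n : ℝ) + 1)⌉₊ ≤ #{i | w < v i} := by
  have h' : qPlus α (fun i => -v i) < ((-w : ℝ) : EReal) := by
    rw [EReal.coe_neg]
    exact EReal.lt_neg_of_lt_neg h
  simpa only [neg_lt_neg_iff] using ceil_le_card_of_qPlus_lt h'

end JaB

theorem outside_interval_many_large_residuals_general
    (n : ℕ) (α : ℝ)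
    (a r : Fin n → ℝ) (y : ℝ)
    (hout : ¬ memJp α a r 0 y) :
    (1 - α) * ((n : ℝ) + 1) ≤
      ((univ.filter fun i : Fin n => r i < |y - a i|).card : ℝ) := by
  have hcount : ⌈(1 - α) * ((n : ℝ) + 1)⌉₊ ≤ #{i | r i < |y - a i|} := by
    simp only [memJp, EReal.coe_zero, sub_zero, add_zero, not_and_or, not_le] at hout
    rcases hout with below | above
    · refine (ceil_le_card_of_lt_qMinus below).trans (card_le_card (monotone_filter_right _ ?_))
      intro i _ hi
      exact lt_abs.mpr (Or.inr (by linarith))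
    · refine (ceil_le_card_of_qPlus_lt above).trans (card_le_card (monotone_filter_right _ ?_))
      intro i _ hi
      exact lt_abs.mpr (Or.inl (by linarith))
  exact (Nat.le_ceil _).trans (by exact_mod_cast hcount)

/-- if y falls outside the jackknife+-type interval, then at least
(1-α)(n+1) of the residual comparisons must fail. -/
theorem outside_interval_many_large_residuals
    (n : ℕ) (hn : 1 ≤ n) (α : ℝ) (hα : α ∈ Set.Ioo (0 : ℝ) 1)
    (a r : Fin n → ℝ) (hr : ∀ i, 0 ≤ r i) (y : ℝ)
    (hout : ¬ memJp α a r 0 y) :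
    (1 - α) * ((n : ℝ) + 1) ≤
      ((univ.filter fun i : Fin n => r i < |y - a i|).card : ℝ) :=
  outside_interval_many_large_residuals_general n α a r y hout

end
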